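/- arXiv:1810.05926 — 2 statements merged into one kernel-verified Lean document; each statement's English description precedes it below -/
import Mathlib

section
/- Let δ₁, δ₂, δ₃ > 0 with δ₁ + δ₂ + δ₃ = 2π, Sᵢ = sin(δᵢ/2), Cᵢ = cos(δᵢ/2). Then the ratio B(n_a, n_b) / B(n_a, n_a) = −C₁ = −cos(δ₁/2), where n_a = (1,−C₁,−C₂,−C₃), n_b = (−C₁,1,−C₃,−C₂), and B is the bilinear form (ab'+a'b+cd'+c'd)S₁ + (ac'+a'c+bd'+b'd)S₂ + (ad'+a'd+bc'+b'c)S₃; in particular the dihedral angle between the hyperplanes a = 0 and b = 0 equals δ₁/2. -/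
/-!
The half-angles δᵢ/2 sum to π, so C₁ = S₂S₃ - C₂C₃ and S₁ = S₂C₃ + C₂S₃. Substituting these, the
Pythagorean identity turns B(n_a, n_a) into -2 S₁S₂S₃ and B(n_a, n_b) into 2 C₁S₁S₂S₃; the
denominator is nonzero because every half-angle lies in (0, π).
-/

open Real

section HalfAngles

variable {x y z : ℝ}

lemma cos_eq_sin_mul_sin_sub_cos_mul_cos_of_add_add_eq_pi (h : x + y + z = π) :
    cos x = sin y * sin z - cos y * cos z := by
  rw [show x = π - (y + z) by linarith, cos_pi_sub, cos_add]
  ring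

lemma sin_eq_sin_mul_cos_add_cos_mul_sin_of_add_add_eq_pi (h : x + y + z = π) :
    sin x = sin y * cos z + cos y * sin z := by
  rw [show x = π - (y + z) by linarith, sin_pi_sub, sin_add]

lemma cos_mul_cos_sub_cos_mul_sin_sum_of_add_add_eq_pi (h : x + y + z = π) :
    (cos y * cos z - cos x) * sin x + (cos x * cos z - cos y) * sin y +
      (cos x * cos y - cos z) * sin z = -(sin x * sin y * sin z) := by
  rw [cos_eq_sin_mul_sin_sub_cos_mul_cos_of_add_add_eq_pi h,
    sin_eq_sin_mul_cos_add_cos_mul_sin_of_add_add_eq_pi h]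
  linear_combination (sin z * cos z) * sin_sq_add_cos_sq y + (sin y * cos y) * sin_sq_add_cos_sq z

lemma one_add_sum_cos_sq_mul_sin_add_sum_of_add_add_eq_pi (h : x + y + z = π) :
    (1 + cos x ^ 2 + cos y ^ 2 + cos z ^ 2) * sin x + 2 * (cos x * cos y - cos z) * sin y +
      2 * (cos x * cos z - cos y) * sin z = 2 * cos x * (sin x * sin y * sin z) := by
  rw [cos_eq_sin_mul_sin_sub_cos_mul_cos_of_add_add_eq_pi h,
    sin_eq_sin_mul_cos_add_cos_mul_sin_of_add_add_eq_pi h]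
  linear_combination
    (2 * cos y * sin z * cos z ^ 2 + cos y * sin z ^ 3 - sin y * sin z ^ 2 * cos z) *
        sin_sq_add_cos_sq y +
      (cos y * sin z - cos y ^ 3 * sin z + sin y * cos z + sin y * cos y ^ 2 * cos z -
        2 * sin y ^ 2 * cos y * sin z) * sin_sq_add_cos_sq z

end HalfAngles

theorem stmt_8 (δ₁ δ₂ δ₃ : ℝ) (h₁ : 0 < δ₁) (h₂ : 0 < δ₂) (h₃ : 0 < δ₃)
    (hsum : δ₁ + δ₂ + δ₃ = 2 * π)
    (S₁ S₂ S₃ C₁ C₂ C₃ : ℝ)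
    (hS₁ : S₁ = sin (δ₁ / 2)) (hS₂ : S₂ = sin (δ₂ / 2)) (hS₃ : S₃ = sin (δ₃ / 2))
    (hC₁ : C₁ = cos (δ₁ / 2)) (hC₂ : C₂ = cos (δ₂ / 2)) (hC₃ : C₃ = cos (δ₃ / 2))
    (B : (ℝ × ℝ × ℝ × ℝ) → (ℝ × ℝ × ℝ × ℝ) → ℝ)
    (hB : ∀ a b c d a' b' c' d' : ℝ,
      B (a, b, c, d) (a', b', c', d') =
        (a * b' + a' * b + c * d' + c' * d) * S₁ +
        (a * c' + a' * c + b * d' + b' * d) * S₂ +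
        (a * d' + a' * d + b * c' + b' * c) * S₃) :
    B (1, -C₁, -C₂, -C₃) (-C₁, 1, -C₃, -C₂) /
        B (1, -C₁, -C₂, -C₃) (1, -C₁, -C₂, -C₃) = -cos (δ₁ / 2) := by
  have hhalf : δ₁ / 2 + δ₂ / 2 + δ₃ / 2 = π := by linarith
  have hsin_pos {δ : ℝ} (h₀ : 0 < δ) (hlt : δ < 2 * π) : 0 < sin (δ / 2) :=
    sin_pos_of_pos_of_lt_pi (by linarith) (by linarith)
  have hprod : 0 < S₁ * S₂ * S₃ := by
    rw [hS₁, hS₂, hS₃]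
    exact mul_pos (mul_pos (hsin_pos h₁ (by linarith)) (hsin_pos h₂ (by linarith)))
      (hsin_pos h₃ (by linarith))
  have hden := cos_mul_cos_sub_cos_mul_sin_sum_of_add_add_eq_pi hhalf
  have hnum := one_add_sum_cos_sq_mul_sin_add_sum_of_add_add_eq_pi hhalf
  rw [← hS₁, ← hS₂, ← hS₃, ← hC₁, ← hC₂, ← hC₃] at hden hnum
  rw [hB, hB, div_eq_iff, ← hC₁]
  · linear_combination hnum + 2 * C₁ * hden
  · intro h
    linarith
end

section
/- Let δ₁, δ₂, δ₃ > 0 with δ₁ + δ₂ + δ₃ = 2π, Sᵢ = sin(δᵢ/2), Cᵢ = cos(δᵢ/2). The map T : ℝ⁴ → ℝ⁴, T(a,b,c,d) = (a + 2dC₃, b + 2dC₂, c + 2dC₁, −d), preserves the quadratic form q(a,b,c,d) = (ab+cd)S₁ + (ac+bd)S₂ + (ad+bc)S₃, and its fixed-point set is the hyperplane {d = 0}. -/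
/-! The half-angles `δᵢ / 2` sum to `π`, so `Sᵢ = SⱼC_k + S_kCⱼ` for `{i, j, k} = {1, 2, 3}`.
These identities make `T` an isometry of `q`: expanding `q ∘ T - q` gives
`-2d` times a linear combination of them. The fixed-point claim is just `-d = d ↔ d = 0`. -/

open Real

theorem sin_eq_of_add_add_eq_pi {x y z : ℝ} (h : x + y + z = π) :
    sin x = sin y * cos z + sin z * cos y := by
  rw [show x = π - (y + z) by linarith, sin_pi_sub, sin_add]
  ring

def octahedronForm {R : Type*} [CommRing R] (S₁ S₂ S₃ a b c d : R) : R :=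
  (a * b + c * d) * S₁ + (a * c + b * d) * S₂ + (a * d + b * c) * S₃

theorem octahedronForm_reflect {R : Type*} [CommRing R] {S₁ S₂ S₃ C₁ C₂ C₃ : R}
    (h₁ : S₁ = S₂ * C₃ + S₃ * C₂) (h₂ : S₂ = S₁ * C₃ + S₃ * C₁) (h₃ : S₃ = S₁ * C₂ + S₂ * C₁)
    (a b c d : R) :
    octahedronForm S₁ S₂ S₃ (a + 2 * d * C₃) (b + 2 * d * C₂) (c + 2 * d * C₁) (-d) =
      octahedronForm S₁ S₂ S₃ a b c d := by
  unfold octahedronForm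
  linear_combination (-2 * d) * ((c + d * C₁) * h₁ + (b + d * C₂) * h₂ + (a + d * C₃) * h₃)

theorem stmt_13_general (δ₁ δ₂ δ₃ : ℝ)
    (hsum : δ₁ + δ₂ + δ₃ = 2 * π)
    (S₁ S₂ S₃ C₁ C₂ C₃ : ℝ)
    (hS₁ : S₁ = sin (δ₁ / 2)) (hS₂ : S₂ = sin (δ₂ / 2)) (hS₃ : S₃ = sin (δ₃ / 2))
    (hC₁ : C₁ = cos (δ₁ / 2)) (hC₂ : C₂ = cos (δ₂ / 2)) (hC₃ : C₃ = cos (δ₃ / 2))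
    (q : ℝ × ℝ × ℝ × ℝ → ℝ)
    (hq : ∀ a b c d : ℝ, q (a, b, c, d) =
      (a * b + c * d) * S₁ + (a * c + b * d) * S₂ + (a * d + b * c) * S₃)
    (T : ℝ × ℝ × ℝ × ℝ → ℝ × ℝ × ℝ × ℝ)
    (hT : ∀ a b c d : ℝ, T (a, b, c, d) =
      (a + 2 * d * C₃, b + 2 * d * C₂, c + 2 * d * C₁, -d)) :
    (∀ a b c d : ℝ, q (T (a, b, c, d)) = q (a, b, c, d)) ∧
      ∀ a b c d : ℝ, T (a, b, c, d) = (a, b, c, d) ↔ d = 0 := by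
  subst hS₁ hS₂ hS₃ hC₁ hC₂ hC₃
  have hπ : δ₁ / 2 + δ₂ / 2 + δ₃ / 2 = π := by linarith
  refine ⟨fun a b c d => ?_, fun a b c d => ?_⟩
  · rw [hT, hq, hq]
    exact octahedronForm_reflect (sin_eq_of_add_add_eq_pi hπ)
      (sin_eq_of_add_add_eq_pi (by linarith)) (sin_eq_of_add_add_eq_pi (by linarith)) a b c d
  · simp only [hT, Prod.mk.injEq, add_eq_left, mul_eq_zero, two_ne_zero, false_or,
      CharZero.neg_eq_self_iff]
    tauto

theorem stmt_13 (δ₁ δ₂ δ₃ : ℝ) (h₁ : 0 < δ₁) (h₂ : 0 < δ₂) (h₃ : 0 < δ₃)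
    (hsum : δ₁ + δ₂ + δ₃ = 2 * π)
    (S₁ S₂ S₃ C₁ C₂ C₃ : ℝ)
    (hS₁ : S₁ = sin (δ₁ / 2)) (hS₂ : S₂ = sin (δ₂ / 2)) (hS₃ : S₃ = sin (δ₃ / 2))
    (hC₁ : C₁ = cos (δ₁ / 2)) (hC₂ : C₂ = cos (δ₂ / 2)) (hC₃ : C₃ = cos (δ₃ / 2))
    (q : ℝ × ℝ × ℝ × ℝ → ℝ)
    (hq : ∀ a b c d : ℝ, q (a, b, c, d) =
      (a * b + c * d) * S₁ + (a * c + b * d) * S₂ + (a * d + b * c) * S₃)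
    (T : ℝ × ℝ × ℝ × ℝ → ℝ × ℝ × ℝ × ℝ)
    (hT : ∀ a b c d : ℝ, T (a, b, c, d) =
      (a + 2 * d * C₃, b + 2 * d * C₂, c + 2 * d * C₁, -d)) :
    (∀ a b c d : ℝ, q (T (a, b, c, d)) = q (a, b, c, d)) ∧
      ∀ a b c d : ℝ, T (a, b, c, d) = (a, b, c, d) ↔ d = 0 :=
  stmt_13_general δ₁ δ₂ δ₃ hsum S₁ S₂ S₃ C₁ C₂ C₃ hS₁ hS₂ hS₃ hC₁ hC₂ hC₃ q hq T hT
end
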